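/- If v ∈ R^q is the top right singular vector of X ∈ R^{p×q}, then (Xv)vᵀ is a best rank-1 approximation of X in Frobenius norm: ‖X − (Xv)vᵀ‖_F ≤ ‖X − Y‖_F for every matrix Y of rank at most 1. -/
import Mathlib

open Matrix

lemma ey_key {p q : ℕ} (X : Matrix (Fin p) (Fin q) ℝ) (u : Fin p → ℝ) (w : Fin q → ℝ)
    (hw : ∑ b, w b ^ 2 = 1) :
    ∑ a, ∑ b, (X a b - u a * w b) ^ 2
      = (∑ a, ∑ b, X a b ^ 2) - 2 * ∑ a, u a * X.mulVec w a + ∑ a, u a ^ 2 := by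
  have : ∀ a, ∑ b, (X a b - u a * w b) ^ 2
      = (∑ b, X a b ^ 2) - 2 * (u a * X.mulVec w a) + u a ^ 2 := by
    intro a
    have h1 : ∑ b, (X a b - u a * w b) ^ 2
        = (∑ b, X a b ^ 2) - 2 * u a * (∑ b, X a b * w b) + u a ^ 2 * ∑ b, w b ^ 2 := by
      rw [Finset.mul_sum, Finset.mul_sum, ← Finset.sum_sub_distrib, ← Finset.sum_add_distrib]
      exact Finset.sum_congr rfl fun b _ => by ring
    rw [h1, hw, Matrix.mulVec, dotProduct]
    ring
  rw [Finset.sum_congr rfl fun a _ => this a, Finset.sum_add_distrib, Finset.sum_sub_distrib,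
    Finset.mul_sum]

lemma ey_rank_one {p q : ℕ} (Y : Matrix (Fin p) (Fin q) ℝ) (hY : Y.rank ≤ 1) :
    ∃ (u : Fin p → ℝ) (w : Fin q → ℝ), ∀ a b, Y a b = u a * w b := by
  rw [Matrix.rank] at hY
  obtain ⟨⟨u, hu⟩, h⟩ := finrank_le_one_iff.mp hY
  refine ⟨u, fun b => ?_, fun a b => ?_⟩
  · exact (h ⟨Y.mulVec (Pi.single b 1), ⟨Pi.single b 1, rfl⟩⟩).choose
  · have hc := (h ⟨Y.mulVec (Pi.single b 1), ⟨Pi.single b 1, rfl⟩⟩).choose_spec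
    have h2 := congrArg Subtype.val hc
    have h3 := congrArg (fun f => f a) h2
    simp only [SetLike.val_smul, Pi.smul_apply, smul_eq_mul] at h3
    have hm : Y.mulVec (Pi.single b 1) a = Y a b := by
      simp [Matrix.mulVec_single]
    rw [hm] at h3
    rw [← h3, mul_comm]

/-- Rank-1 Eckart–Young in projection form: if `v` is a top right singular vector of
`X` (a unit vector maximizing `‖Xw‖₂` over unit vectors `w`), then `(Xv)vᵀ` is a best
rank-1 approximation of `X` in Frobenius norm: `‖X − (Xv)vᵀ‖_F ≤ ‖X − Y‖_F` for every
matrix `Y` of rank at most 1. -/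
theorem rank_one_eckart_young (p q : ℕ) (X : Matrix (Fin p) (Fin q) ℝ)
    (v : Fin q → ℝ) (hv : ∑ i, v i ^ 2 = 1)
    (hmax : ∀ w : Fin q → ℝ, ∑ i, w i ^ 2 = 1 →
      ∑ a, (X.mulVec w a) ^ 2 ≤ ∑ a, (X.mulVec v a) ^ 2)
    (Y : Matrix (Fin p) (Fin q) ℝ) (hY : Y.rank ≤ 1) :
    Real.sqrt (∑ a, ∑ b, ((X - vecMulVec (X.mulVec v) v) a b) ^ 2)
      ≤ Real.sqrt (∑ a, ∑ b, ((X - Y) a b) ^ 2) := by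
  apply Real.sqrt_le_sqrt
  -- LHS sum equals ‖X‖² - ‖Xv‖²
  have hL : ∑ a, ∑ b, ((X - vecMulVec (X.mulVec v) v) a b) ^ 2
      = (∑ a, ∑ b, X a b ^ 2) - ∑ a, (X.mulVec v a) ^ 2 := by
    have := ey_key X (X.mulVec v) v hv
    simp only [Matrix.sub_apply, Matrix.vecMulVec_apply] at *
    rw [this]; ring_nf
  rw [hL]
  obtain ⟨u, w, huw⟩ := ey_rank_one Y hY
  by_cases hw0 : w = 0
  · have : ∑ a, ∑ b, ((X - Y) a b) ^ 2 = ∑ a, ∑ b, X a b ^ 2 := by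
      apply Finset.sum_congr rfl; intro a _
      apply Finset.sum_congr rfl; intro b _
      simp [huw a b, hw0]
    rw [this]
    have : 0 ≤ ∑ a, (X.mulVec v a) ^ 2 := Finset.sum_nonneg fun a _ => sq_nonneg _
    linarith
  · -- normalize w
    have hs : 0 < ∑ b, w b ^ 2 := by
      rcases Function.ne_iff.mp hw0 with ⟨b, hb⟩
      have h0 : 0 < w b ^ 2 := pow_two_pos_of_ne_zero hb
      exact h0.trans_le (Finset.single_le_sum (fun i _ => sq_nonneg (w i)) (Finset.mem_univ b))
    set c : ℝ := Real.sqrt (∑ b, w b ^ 2) with hc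
    have hcpos : 0 < c := Real.sqrt_pos.mpr hs
    set w' : Fin q → ℝ := fun b => w b / c with hw'
    set u' : Fin p → ℝ := fun a => u a * c with hu'
    have hw'unit : ∑ b, w' b ^ 2 = 1 := by
      have h1 : ∑ b, w' b ^ 2 = (∑ b, w b ^ 2) / c ^ 2 := by
        rw [Finset.sum_div]
        exact Finset.sum_congr rfl fun b _ => by rw [hw']; field_simp
      rw [h1, hc, Real.sq_sqrt hs.le]
      exact div_self hs.ne'
    have hYeq : ∀ a b, Y a b = u' a * w' b := by
      intro a b
      rw [huw a b, hu', hw']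
      field_simp
    have hR : ∑ a, ∑ b, ((X - Y) a b) ^ 2
        = (∑ a, ∑ b, X a b ^ 2) - 2 * ∑ a, u' a * X.mulVec w' a + ∑ a, u' a ^ 2 := by
      rw [← ey_key X u' w' hw'unit]
      apply Finset.sum_congr rfl; intro a _
      apply Finset.sum_congr rfl; intro b _
      rw [Matrix.sub_apply, hYeq a b]
    rw [hR]
    have hsq : 0 ≤ ∑ a, (X.mulVec w' a - u' a) ^ 2 :=
      Finset.sum_nonneg fun a _ => sq_nonneg _
    have hexp : ∑ a, (X.mulVec w' a - u' a) ^ 2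
        = ∑ a, (X.mulVec w' a) ^ 2 - 2 * ∑ a, u' a * X.mulVec w' a + ∑ a, u' a ^ 2 := by
      rw [Finset.mul_sum, ← Finset.sum_sub_distrib, ← Finset.sum_add_distrib]
      exact Finset.sum_congr rfl fun a _ => by ring
    have hmax' := hmax w' hw'unit
    nlinarith [hsq, hexp, hmax']
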